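/- arXiv:math/0504482 — 3 statements merged into one kernel-verified Lean document; each statement's English description precedes it below -/
import Mathlib

section
/- The tetrahedron in ℝ³ with vertices (0,0,0), (1,0,0), (0,1,0), and (1,1,k), where k is a positive integer, contains no integer points other than its four vertices. -/
lemma hull4 {E : Type*} [AddCommGroup E] [Module ℝ E] (v0 v1 v2 v3 p : E)
    (hp : p ∈ convexHull ℝ ({v0, v1, v2, v3} : Set E)) :
    ∃ a b c d : ℝ, 0 ≤ a ∧ 0 ≤ b ∧ 0 ≤ c ∧ 0 ≤ d ∧ a + b + c + d = 1 ∧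
      p = a • v0 + b • v1 + c • v2 + d • v3 := by
  rw [convexHull_insert (by simp), mem_convexJoin] at hp
  obtain ⟨x0, hx0, z1, hz1, hp⟩ := hp
  rw [convexHull_insert (by simp), mem_convexJoin] at hz1
  obtain ⟨x1, hx1, z2, hz2, hz1⟩ := hz1
  rw [convexHull_pair] at hz2
  simp only [Set.mem_singleton_iff] at hx0 hx1
  subst hx0 hx1
  obtain ⟨c', d', hc', hd', hcd, rfl⟩ := hz2
  obtain ⟨b', t1, hb', ht1, hbt, rfl⟩ := hz1
  obtain ⟨a, t2, ha, ht2, hat, rfl⟩ := hp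
  refine ⟨a, t2 * b', t2 * (t1 * c'), t2 * (t1 * d'), ha, by positivity, by positivity,
    by positivity, by linear_combination t2*t1*hcd + t2*hbt + hat, ?_⟩
  simp only [smul_add, smul_smul, add_assoc]

lemma int01 {n : ℤ} (h0 : (0:ℝ) ≤ n) (h1 : (n:ℝ) ≤ 1) : n = 0 ∨ n = 1 := by
  have : (0:ℤ) ≤ n ∧ n ≤ 1 := ⟨by exact_mod_cast h0, by exact_mod_cast h1⟩
  omega

/-- The tetrahedron Δ_k with vertices (0,0,0), (1,0,0), (0,1,0), (1,1,k) contains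
no integer points other than its four vertices. -/
theorem stmt_0 (k : ℕ) (hk : 0 < k) (p : Fin 3 → ℝ)
    (hp : p ∈ convexHull ℝ
      ({![0,0,0], ![1,0,0], ![0,1,0], ![1,1,(k:ℝ)]} : Set (Fin 3 → ℝ)))
    (hint : ∀ i, ∃ n : ℤ, p i = n) :
    p ∈ ({![0,0,0], ![1,0,0], ![0,1,0], ![1,1,(k:ℝ)]} : Set (Fin 3 → ℝ)) := by
  obtain ⟨a, b, c, d, ha, hb, hc, hd, hsum, hrep⟩ := hull4 _ _ _ _ _ hp
  have h0 : p 0 = b + d := by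
    have := congrFun hrep 0; simpa using this
  have h1 : p 1 = c + d := by
    have := congrFun hrep 1; simpa using this
  have h2 : p 2 = d * k := by
    have := congrFun hrep 2; simpa [mul_comm] using this
  obtain ⟨n0, hn0⟩ := hint 0
  obtain ⟨n1, hn1⟩ := hint 1
  have hbd : n0 = 0 ∨ n0 = 1 := int01 (by rw [← hn0, h0]; linarith) (by rw [← hn0, h0]; linarith)
  have hcd : n1 = 0 ∨ n1 = 1 := int01 (by rw [← hn1, h1]; linarith) (by rw [← hn1, h1]; linarith)
  simp only [Set.mem_insert_iff, Set.mem_singleton_iff]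
  rcases hbd with h | h
  · -- b + d = 0, so b = d = 0
    have hbd0 : b + d = 0 := by rw [← h0, hn0, h]; simp
    have hb0 : b = 0 := by linarith
    have hd0 : d = 0 := by linarith
    rcases hcd with h' | h'
    · left
      have hc0 : c = 0 := by
        have : c + d = 0 := by rw [← h1, hn1, h']; simp
        linarith
      funext i
      fin_cases i <;> simp [h0, h1, h2, hb0, hc0, hd0]
    · right; right; left
      have hc1 : c = 1 := by
        have : c + d = 1 := by rw [← h1, hn1, h']; simp
        linarith
      funext i
      fin_cases i <;> simp [h0, h1, h2, hb0, hc1, hd0]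
  · -- b + d = 1, so a = c = 0
    have hbd1 : b + d = 1 := by rw [← h0, hn0, h]; simp
    have hc0 : c = 0 := by linarith
    rcases hcd with h' | h'
    · right; left
      have hd0 : d = 0 := by
        have : c + d = 0 := by rw [← h1, hn1, h']; simp
        linarith
      funext i
      fin_cases i <;> simp [h0, h1, h2, hc0, hd0, hbd1] <;> linarith
    · right; right; right
      have hd1 : d = 1 := by
        have : c + d = 1 := by rw [← h1, hn1, h']; simp
        linarith
      funext i
      fin_cases i <;> simp [h0, h1, h2, hc0, hd1, hbd1] <;> linarith
end

section
/- The number of interior lattice points of 2·Δ_k equals k−1, where Δ_k is the tetrahedron with vertices (0,0,0), (1,0,0), (0,1,0), (1,1,k). -/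
open Pointwise Set

noncomputable section StmtAux

/-- The four vertices of Δ_k. -/
def stmt2_vtx (k : ℕ) : Fin 4 → (Fin 3 → ℝ) := ![![0,0,0], ![1,0,0], ![0,1,0], ![1,1,(k:ℝ)]]

theorem stmt2_vtx_ind (k : ℕ) (hk : 0 < k) : AffineIndependent ℝ (stmt2_vtx k) := by
  rw [affineIndependent_iff]
  intro s w hw0 hsum e he
  set w' : Fin 4 → ℝ := fun i => if i ∈ s then w i else 0 with hw'
  have h1 : ∑ i, w' i = 0 := by
    rw [← hw0]
    simp [hw', Finset.sum_ite_mem]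
  have h2 : ∑ i, w' i • stmt2_vtx k i = 0 := by
    rw [← hsum]
    have : ∀ i, w' i • stmt2_vtx k i = if i ∈ s then w i • stmt2_vtx k i else 0 := by
      intro i; by_cases h : i ∈ s <;> simp [hw', h]
    simp_rw [this]
    simp [Finset.sum_ite_mem]
  have hx := congrFun h2 0
  have hy := congrFun h2 1
  have hz := congrFun h2 2
  simp [Fin.sum_univ_four, stmt2_vtx, Matrix.vecHead, Matrix.vecTail] at hx hy hz h1
  have h3 : w' 3 = 0 := by
    rcases hz with h | h
    · exact h
    · exact absurd h hk.ne'
  have : w' e = 0 := by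
    fin_cases e <;> simp_all
  simpa [hw', he] using this

theorem stmt2_vtx_tot (k : ℕ) (hk : 0 < k) : affineSpan ℝ (Set.range (stmt2_vtx k)) = ⊤ := by
  rw [(stmt2_vtx_ind k hk).affineSpan_eq_top_iff_card_eq_finrank_add_one]
  simp

/-- The four vertices as an affine basis of ℝ³. -/
def stmt2_basis (k : ℕ) (hk : 0 < k) : AffineBasis (Fin 4) ℝ (Fin 3 → ℝ) :=
  ⟨stmt2_vtx k, stmt2_vtx_ind k hk, stmt2_vtx_tot k hk⟩

/-- Barycentric coordinates with respect to the vertices of Δ_k. -/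
def stmt2_wts (k : ℕ) (x : Fin 3 → ℝ) : Fin 4 → ℝ :=
  ![1 - x 0 - x 1 + x 2 / k, x 0 - x 2 / k, x 1 - x 2 / k, x 2 / k]

theorem stmt2_wts_sum (k : ℕ) (x : Fin 3 → ℝ) : ∑ i, stmt2_wts k x i = 1 := by
  simp [stmt2_wts, Fin.sum_univ_four]; ring

theorem stmt2_wts_comb (k : ℕ) (hk : 0 < k) (x : Fin 3 → ℝ) :
    Finset.univ.affineCombination ℝ (stmt2_vtx k) (stmt2_wts k x) = x := by
  have hks : (k:ℝ) ≠ 0 := Nat.cast_ne_zero.2 hk.ne'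
  rw [Finset.univ.affineCombination_eq_linear_combination (stmt2_vtx k) (stmt2_wts k x)
    (stmt2_wts_sum k x)]
  funext j
  fin_cases j <;>
    simp [Fin.sum_univ_four, stmt2_vtx, stmt2_wts, Matrix.vecHead, Matrix.vecTail] <;>
    field_simp

theorem stmt2_coord_eq (k : ℕ) (hk : 0 < k) (x : Fin 3 → ℝ) (i : Fin 4) :
    (stmt2_basis k hk).coord i x = stmt2_wts k x i := by
  conv_lhs => rw [← stmt2_wts_comb k hk x]
  exact (stmt2_basis k hk).coord_apply_combination_of_mem (Finset.mem_univ i) (stmt2_wts_sum k x)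

theorem stmt2_range_vtx (k : ℕ) :
    Set.range (stmt2_vtx k)
      = ({![0,0,0], ![1,0,0], ![0,1,0], ![1,1,(k:ℝ)]} : Set (Fin 3 → ℝ)) := by
  ext x
  constructor
  · rintro ⟨i, rfl⟩
    fin_cases i <;> simp [stmt2_vtx]
  · rintro (rfl | rfl | rfl | rfl)
    exacts [⟨0, rfl⟩, ⟨1, rfl⟩, ⟨2, rfl⟩, ⟨3, rfl⟩]

theorem stmt2_interior_char (k : ℕ) (hk : 0 < k) :
    interior (convexHull ℝ ({![0,0,0], ![1,0,0], ![0,1,0], ![1,1,(k:ℝ)]} : Set (Fin 3 → ℝ)))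
      = {x | ∀ i, 0 < stmt2_wts k x i} := by
  rw [← stmt2_range_vtx k]
  have h := (stmt2_basis k hk).interior_convexHull
  have hb : Set.range ⇑(stmt2_basis k hk) = Set.range (stmt2_vtx k) := rfl
  rw [hb] at h
  rw [h]
  ext x
  simp only [Set.mem_setOf_eq, stmt2_coord_eq k hk]

end StmtAux

open Pointwise

/-- The number of interior lattice points of 2·Δ_k equals k − 1, where Δ_k is the
tetrahedron with vertices (0,0,0), (1,0,0), (0,1,0), (1,1,k). -/
theorem stmt_2 (k : ℕ) (hk : 0 < k) :
    {p : Fin 3 → ℤ | (fun i => (p i : ℝ)) ∈ interior ((2:ℝ) • convexHull ℝ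
      ({![0,0,0], ![1,0,0], ![0,1,0], ![1,1,(k:ℝ)]} : Set (Fin 3 → ℝ)))}.ncard
      = k - 1 := by
  have hkR : (0:ℝ) < k := by exact_mod_cast hk
  have h2k : (0:ℝ) < 2 * k := by linarith
  have hkZ : (0:ℤ) < (k:ℤ) := by exact_mod_cast hk
  have hset : {p : Fin 3 → ℤ | (fun i => (p i : ℝ)) ∈ interior ((2:ℝ) • convexHull ℝ
      ({![0,0,0], ![1,0,0], ![0,1,0], ![1,1,(k:ℝ)]} : Set (Fin 3 → ℝ)))}
      = (fun z : ℤ => ![1,1,z]) '' Set.Ioo (0:ℤ) (k:ℤ) := by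
    ext p
    have key : (fun i => (p i : ℝ)) ∈ interior ((2:ℝ) • convexHull ℝ
        ({![0,0,0], ![1,0,0], ![0,1,0], ![1,1,(k:ℝ)]} : Set (Fin 3 → ℝ)))
        ↔ (0 < p 2 ∧ p 2 < (k:ℤ) * p 0 ∧ p 2 < (k:ℤ) * p 1 ∧
            (k:ℤ) * p 0 + (k:ℤ) * p 1 < 2 * k + p 2) := by
      rw [interior_smul₀ (two_ne_zero) _, mem_smul_set_iff_inv_smul_mem₀ (two_ne_zero),
        stmt2_interior_char k hk]
      set q : Fin 3 → ℝ := (2:ℝ)⁻¹ • (fun i => (p i : ℝ)) with hq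
      have hq' : ∀ j, q j = (p j : ℝ) / 2 := by
        intro j; simp [hq]; ring
      have e0 : stmt2_wts k q 0 = (2*(k:ℝ) - k * p 0 - k * p 1 + p 2) / (2 * k) := by
        simp [stmt2_wts, hq']
        field_simp
      have e1 : stmt2_wts k q 1 = ((k:ℝ) * p 0 - p 2) / (2 * k) := by
        simp [stmt2_wts, hq']
        field_simp
      have e2 : stmt2_wts k q 2 = ((k:ℝ) * p 1 - p 2) / (2 * k) := by
        simp [stmt2_wts, hq']
        field_simp
      have e3 : stmt2_wts k q 3 = (p 2 : ℝ) / (2 * k) := by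
        simp [stmt2_wts, hq']
        ring
      constructor
      · intro h
        have h0 := h 0; have h1 := h 1; have h2 := h 2; have h3 := h 3
        rw [e0, lt_div_iff₀ h2k, zero_mul] at h0
        rw [e1, lt_div_iff₀ h2k, zero_mul] at h1
        rw [e2, lt_div_iff₀ h2k, zero_mul] at h2
        rw [e3, lt_div_iff₀ h2k, zero_mul] at h3
        refine ⟨?_, ?_, ?_, ?_⟩
        · exact_mod_cast h3
        · have : ((p 2 : ℤ):ℝ) < (((k:ℤ) * p 0 : ℤ):ℝ) := by push_cast; linarith
          exact_mod_cast this
        · have : ((p 2 : ℤ):ℝ) < (((k:ℤ) * p 1 : ℤ):ℝ) := by push_cast; linarith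
          exact_mod_cast this
        · have : (((k:ℤ) * p 0 + (k:ℤ) * p 1 : ℤ):ℝ) < ((2 * (k:ℤ) + p 2 : ℤ):ℝ) := by
            push_cast; linarith
          exact_mod_cast this
      · rintro ⟨hA, hB, hC, hD⟩
        have hA' : (0:ℝ) < (p 2 : ℝ) := by exact_mod_cast hA
        have hB' : ((p 2 : ℤ):ℝ) < (((k:ℤ) * p 0 : ℤ):ℝ) := by exact_mod_cast hB
        have hC' : ((p 2 : ℤ):ℝ) < (((k:ℤ) * p 1 : ℤ):ℝ) := by exact_mod_cast hC
        have hD' : (((k:ℤ) * p 0 + (k:ℤ) * p 1 : ℤ):ℝ) < ((2 * (k:ℤ) + p 2 : ℤ):ℝ) := by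
          exact_mod_cast hD
        push_cast at hB' hC' hD'
        intro i
        fin_cases i
        · show (0:ℝ) < stmt2_wts k q 0
          rw [e0, lt_div_iff₀ h2k, zero_mul]; linarith
        · show (0:ℝ) < stmt2_wts k q 1
          rw [e1, lt_div_iff₀ h2k, zero_mul]; linarith
        · show (0:ℝ) < stmt2_wts k q 2
          rw [e2, lt_div_iff₀ h2k, zero_mul]; linarith
        · show (0:ℝ) < stmt2_wts k q 3
          rw [e3, lt_div_iff₀ h2k, zero_mul]; linarith
    simp only [Set.mem_setOf_eq, key, Set.mem_image, Set.mem_Ioo]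
    constructor
    · rintro ⟨hA, hB, hC, hD⟩
      have hp0 : p 0 = 1 := by
        have h1 : 1 ≤ p 0 := by
          by_contra h
          push_neg at h
          have : p 0 ≤ 0 := by omega
          nlinarith [mul_nonpos_of_nonneg_of_nonpos hkZ.le this]
        have h2 : p 0 ≤ 1 := by
          by_contra h
          push_neg at h
          have : 2 ≤ p 0 := by omega
          have : 2 * (k:ℤ) ≤ (k:ℤ) * p 0 := by nlinarith
          nlinarith
        omega
      have hp1 : p 1 = 1 := by
        have h1 : 1 ≤ p 1 := by
          by_contra h
          push_neg at h
          have : p 1 ≤ 0 := by omega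
          nlinarith [mul_nonpos_of_nonneg_of_nonpos hkZ.le this]
        have h2 : p 1 ≤ 1 := by
          by_contra h
          push_neg at h
          have : 2 ≤ p 1 := by omega
          have : 2 * (k:ℤ) ≤ (k:ℤ) * p 1 := by nlinarith
          nlinarith
        omega
      refine ⟨p 2, ⟨hA, ?_⟩, ?_⟩
      · rw [hp0] at hB; omega
      · funext j
        fin_cases j <;> simp [hp0, hp1]
    · rintro ⟨z, ⟨hz0, hzk⟩, rfl⟩
      refine ⟨by simpa using hz0, by simpa using hzk, by simpa using hzk, by simp; omega⟩
  rw [hset, Set.ncard_image_of_injective _ (fun a b h => by simpa using congrFun h 2),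
    ← Finset.coe_Ioo, Set.ncard_coe_finset, Int.card_Ioo]
  omega
end

section
/- For all integers m ≥ d+2 ≥ 3 (i.e. d ≥ 1 and m ≥ d+2), the inequality (m−3)(m−4)⋯(m−d−2) + 2(m−3)(m−4)⋯(m−d−1) + Σ_{k=1}^{d−2} [(m−2)(m−3)⋯(m−k−1)]·[(m−3)(m−4)⋯(m−d+k−1)] ≥ (m−2)(m−3)⋯(m−d−1) holds. -/
/-!
Write `Q = (m-3)⋯(m-d-1)`. Then the first term is `Q (m-d-2)` and the right-hand side is
`(m-2) Q = (m-d-2) Q + 2Q + (d-2) Q`, so it suffices that each of the `d-2` summands is at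
least `Q`. Split `Q = [(m-3)⋯(m-k-2)]·[(m-k-3)⋯(m-d-1)]`: shifting the two blocks back by
`1` and by `k` only enlarges their nonnegative factors, and turns them into the two factors
of the `k`-th summand.
-/

open Finset

namespace FallingProd

lemma prod_Icc_sub_nonneg (m : ℤ) (a b : ℕ) (hb : (b : ℤ) ≤ m) :
    0 ≤ ∏ j ∈ Icc a b, (m - j) :=
  prod_nonneg fun j hj => by
    have : (j : ℤ) ≤ b := by exact_mod_cast (mem_Icc.mp hj).2
    linarith

lemma prod_Icc_split (f : ℕ → ℤ) {a b c : ℕ} (hab : a ≤ b + 1) (hbc : b ≤ c) :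
    ∏ j ∈ Icc a c, f j = (∏ j ∈ Icc a b, f j) * ∏ j ∈ Icc (b + 1) c, f j := by
  simp only [← Ico_add_one_right_eq_Icc]
  exact (prod_Ico_consecutive f hab (by omega)).symm

lemma prod_Icc_add_le (m : ℤ) (a b s : ℕ) (h : (b : ℤ) + s ≤ m) :
    ∏ j ∈ Icc (a + s) (b + s), (m - j) ≤ ∏ j ∈ Icc a b, (m - j) := by
  rw [← map_add_right_Icc, prod_map]
  refine prod_le_prod (fun j hj => ?_) (fun j _ => ?_)
  · have : (j : ℤ) ≤ b := by exact_mod_cast (mem_Icc.mp hj).2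
    push_cast [addRightEmbedding_apply]
    linarith
  · push_cast [addRightEmbedding_apply]
    linarith

lemma prod_Icc_three_le_mul_prod (d k : ℕ) (m : ℤ) (hk : k < d) (hm : (d : ℤ) + 1 ≤ m) :
    ∏ j ∈ Icc 3 (d + 1), (m - j)
      ≤ (∏ j ∈ Icc 2 (k + 1), (m - j)) * ∏ j ∈ Icc 3 (d - k + 1), (m - j) := by
  have hkd : (k : ℤ) < d := by exact_mod_cast hk
  have hleft : ∏ j ∈ Icc 3 (k + 2), (m - j) ≤ ∏ j ∈ Icc 2 (k + 1), (m - j) :=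
    prod_Icc_add_le m 2 (k + 1) 1 (by push_cast; linarith)
  have hright : ∏ j ∈ Icc (k + 3) (d + 1), (m - j) ≤ ∏ j ∈ Icc 3 (d - k + 1), (m - j) := by
    have := prod_Icc_add_le m 3 (d - k + 1) k (by push_cast [Nat.cast_sub hk.le]; linarith)
    rwa [show 3 + k = k + 3 by omega, show d - k + 1 + k = d + 1 by omega] at this
  rw [prod_Icc_split _ (b := k + 2) (by omega) (by omega)]
  exact mul_le_mul hleft hright (prod_Icc_sub_nonneg m _ _ (by push_cast; linarith))
    ((prod_Icc_sub_nonneg m _ _ (by push_cast; linarith)).trans hleft)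

end FallingProd

open FallingProd in
/-- For d ≥ 1 and m ≥ d + 2:
(m−3)⋯(m−d−2) + 2(m−3)⋯(m−d−1)
  + Σ_{k=1}^{d−2} [(m−2)⋯(m−k−1)]·[(m−3)⋯(m−d+k−1)] ≥ (m−2)⋯(m−d−1). -/
theorem stmt_6 (d : ℕ) (m : ℤ) (hd : 1 ≤ d) (hm : (d : ℤ) + 2 ≤ m) :
    (∏ j ∈ Finset.Icc 3 (d + 2), (m - (j : ℤ)))
      + 2 * (∏ j ∈ Finset.Icc 3 (d + 1), (m - (j : ℤ)))
      + ∑ k ∈ Finset.Icc 1 (d - 2),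
          (∏ j ∈ Finset.Icc 2 (k + 1), (m - (j : ℤ)))
            * (∏ j ∈ Finset.Icc 3 (d - k + 1), (m - (j : ℤ)))
      ≥ ∏ j ∈ Finset.Icc 2 (d + 1), (m - (j : ℤ)) := by
  set Q := ∏ j ∈ Icc 3 (d + 1), (m - (j : ℤ))
  have hQ : 0 ≤ Q := prod_Icc_sub_nonneg m _ _ (by push_cast; linarith)
  have htop : ∏ j ∈ Icc 3 (d + 2), (m - (j : ℤ)) = Q * (m - (d + 2)) := by
    rw [prod_Icc_split _ (b := d + 1) (by omega) (by omega)]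
    simp only [Icc_self, prod_singleton, Q]
    push_cast
    ring
  have hbot : ∏ j ∈ Icc 2 (d + 1), (m - (j : ℤ)) = (m - 2) * Q := by
    rw [prod_Icc_split _ (b := 2) (by omega) (by omega)]
    simp [Q]
  have hsum : ((d - 2 : ℕ) : ℤ) * Q ≤ ∑ k ∈ Icc 1 (d - 2),
      (∏ j ∈ Icc 2 (k + 1), (m - (j : ℤ))) * ∏ j ∈ Icc 3 (d - k + 1), (m - (j : ℤ)) := by
    have := card_nsmul_le_sum (Icc 1 (d - 2)) _ Q fun k hk =>
      prod_Icc_three_le_mul_prod d k m (by simp at hk; omega) (by linarith)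
    simpa using this
  have hcast : (d : ℤ) - 2 ≤ ((d - 2 : ℕ) : ℤ) := by omega
  rw [ge_iff_le, htop, hbot]
  nlinarith [mul_le_mul_of_nonneg_right hcast hQ]
end
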